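/- Let p be a probability distribution on a finite set [k] and for each x let N_x ~ Bin(N, p(x)). Then the quantity Σ_x p(x)·E[log((N_x+1)/(N·p(x)))] satisfies −Σ_x p(x)·log((N+1)/N) ≤ Σ_x p(x)·E[log((N_x+1)/(N·p(x)))] ≤ k/N. In particular |E[H̄] − H(p)| ≤ k/N, where E[H̄] = Σ_x p(x)·E[log(N/(N_x+1))]. -/

import Mathlib

/-!
Everything happens coordinatewise. For `X ~ Bin(N, r)` the inequalities
`1 - 1/y ≤ log y ≤ y - 1` at `y = (X + 1)/(N r)` reduce `E[log ((X + 1)/(N r))]` to the moments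
`E[X] = N r` and `(N + 1) r E[1/(X + 1)] = 1 - (1 - r)^(N + 1)`, which place it in `[0, 1/(N r)]`.
Weighting by `p x` and summing over `x` gives `0 ≤ S ≤ k/N` for the weighted sum `S`, and
`E[H̄] - H(p) = -S` because `log (N/(X + 1)) = -log ((X + 1)/(N r)) - log r`.
-/

open Finset

/-- pmf of Bin(m,r) at i -/
noncomputable def binomPMF (m : ℕ) (r : ℝ) (i : ℕ) : ℝ :=
  (m.choose i : ℝ) * r ^ i * (1 - r) ^ (m - i)

/-- expectation of f(X) for X ~ Bin(m,r) -/
noncomputable def binomExp (m : ℕ) (r : ℝ) (f : ℕ → ℝ) : ℝ :=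
  ∑ i ∈ Finset.range (m + 1), binomPMF m r i * f i

section Binomial

variable {m : ℕ} {r : ℝ}

lemma binomPMF_nonneg (h0 : 0 ≤ r) (h1 : r ≤ 1) (i : ℕ) : 0 ≤ binomPMF m r i := by
  have : 0 ≤ 1 - r := by linarith
  unfold binomPMF
  positivity

lemma sum_binomPMF (m : ℕ) (r : ℝ) : ∑ i ∈ range (m + 1), binomPMF m r i = 1 := by
  have h := add_pow r (1 - r) m
  rw [add_sub_cancel, one_pow] at h
  exact (sum_congr rfl fun i _ => by unfold binomPMF; ring).trans h.symm

lemma succ_mul_binomPMF (m : ℕ) (r : ℝ) (i : ℕ) :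
    ((m : ℝ) + 1) * r * binomPMF m r i = ((i : ℝ) + 1) * binomPMF (m + 1) r (i + 1) := by
  have hc : ((m : ℝ) + 1) * m.choose i = (m + 1).choose (i + 1) * ((i : ℝ) + 1) := by
    exact_mod_cast Nat.add_one_mul_choose_eq m i
  unfold binomPMF
  rw [Nat.add_sub_add_right]
  linear_combination r ^ (i + 1) * (1 - r) ^ (m - i) * hc

lemma binomExp_mono (h0 : 0 ≤ r) (h1 : r ≤ 1) {f g : ℕ → ℝ} (hfg : f ≤ g) :
    binomExp m r f ≤ binomExp m r g :=
  sum_le_sum fun i _ => mul_le_mul_of_nonneg_left (hfg i) (binomPMF_nonneg h0 h1 i)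

lemma binomExp_affine (m : ℕ) (r a b : ℝ) (g : ℕ → ℝ) :
    binomExp m r (fun i => a * g i + b) = a * binomExp m r g + b := by
  simp only [binomExp, mul_add, sum_add_distrib, ← sum_mul, sum_binomPMF, one_mul, mul_sum]
  congr 1
  exact sum_congr rfl fun i _ => by ring

lemma binomExp_id (m : ℕ) (r : ℝ) : binomExp m r (fun i => (i : ℝ)) = m * r := by
  cases m with
  | zero => simp [binomExp]
  | succ n =>
    rw [binomExp, sum_range_succ', Nat.cast_zero, mul_zero, add_zero]
    have hterm : ∀ i ∈ range (n + 1),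
        binomPMF (n + 1) r (i + 1) * ((i + 1 : ℕ) : ℝ) = ((n : ℝ) + 1) * r * binomPMF n r i :=
      fun i _ => by rw [succ_mul_binomPMF]; push_cast; ring
    rw [sum_congr rfl hterm, ← mul_sum, sum_binomPMF]
    push_cast
    ring

lemma succ_mul_binomExp_inv_succ (m : ℕ) (r : ℝ) :
    ((m : ℝ) + 1) * r * binomExp m r (fun i => ((i : ℝ) + 1)⁻¹) = 1 - (1 - r) ^ (m + 1) := by
  have hterm : ∀ i ∈ range (m + 1),
      ((m : ℝ) + 1) * r * (binomPMF m r i * ((i : ℝ) + 1)⁻¹) = binomPMF (m + 1) r (i + 1) :=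
    fun i _ => by
      rw [← mul_assoc, succ_mul_binomPMF]
      field_simp
  have htotal := sum_binomPMF (m + 1) r
  rw [sum_range_succ'] at htotal
  rw [binomExp, mul_sum, sum_congr rfl hterm]
  have hzero : binomPMF (m + 1) r 0 = (1 - r) ^ (m + 1) := by simp [binomPMF]
  linarith

end Binomial

section LogRatio

variable {N : ℕ} {r : ℝ}

lemma binomExp_log_succ_div_nonneg (hN : 0 < N) (hr0 : 0 < r) (hr1 : r ≤ 1) :
    0 ≤ binomExp N r (fun i => Real.log (((i : ℝ) + 1) / ((N : ℝ) * r))) := by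
  have hNr : (0 : ℝ) < N * r := by positivity
  have hmoment := succ_mul_binomExp_inv_succ N r
  have hq : 0 ≤ (1 - r) ^ (N + 1) := pow_nonneg (by linarith) _
  have hE : 0 ≤ binomExp N r (fun i => ((i : ℝ) + 1)⁻¹) :=
    sum_nonneg fun i _ => mul_nonneg (binomPMF_nonneg hr0.le hr1 i) (by positivity)
  calc (0 : ℝ) ≤ -(N * r) * binomExp N r (fun i => ((i : ℝ) + 1)⁻¹) + 1 := by nlinarith
    _ = binomExp N r (fun i => -(N * r) * ((i : ℝ) + 1)⁻¹ + 1) := (binomExp_affine ..).symm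
    _ ≤ _ := binomExp_mono hr0.le hr1 fun i => by
      have := Real.one_sub_inv_le_log_of_pos (x := ((i : ℝ) + 1) / (N * r)) (by positivity)
      rw [inv_div] at this
      linarith [show (N : ℝ) * r / (i + 1) = N * r * ((i : ℝ) + 1)⁻¹ from div_eq_mul_inv ..]

lemma binomExp_log_succ_div_le (hN : 0 < N) (hr0 : 0 < r) (hr1 : r ≤ 1) :
    binomExp N r (fun i => Real.log (((i : ℝ) + 1) / ((N : ℝ) * r))) ≤ 1 / ((N : ℝ) * r) := by
  have hNr : (0 : ℝ) < N * r := by positivity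
  calc _ ≤ binomExp N r (fun i => ((N : ℝ) * r)⁻¹ * i + (((N : ℝ) * r)⁻¹ - 1)) :=
        binomExp_mono hr0.le hr1 fun i => by
          have := Real.log_le_sub_one_of_pos (x := ((i : ℝ) + 1) / (N * r)) (by positivity)
          convert this using 1
          ring
    _ = 1 / ((N : ℝ) * r) := by
        rw [binomExp_affine, binomExp_id]
        field_simp
        ring

lemma binomExp_log_div_succ (hN : 0 < N) (hr : 0 < r) :
    binomExp N r (fun i => Real.log ((N : ℝ) / ((i : ℝ) + 1))) =
      -binomExp N r (fun i => Real.log (((i : ℝ) + 1) / ((N : ℝ) * r))) - Real.log r := by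
  have hN' : (0 : ℝ) < N := by exact_mod_cast hN
  have hsplit : (fun i : ℕ => Real.log ((N : ℝ) / ((i : ℝ) + 1))) =
      fun i : ℕ => -1 * Real.log (((i : ℝ) + 1) / ((N : ℝ) * r)) + -Real.log r := by
    funext i
    rw [Real.log_div (by positivity) (by positivity), Real.log_div (by positivity) (by positivity),
      Real.log_mul hN'.ne' hr.ne']
    ring
  rw [hsplit, binomExp_affine]
  ring

end LogRatio

theorem bias_bound_simple (k N : ℕ) (hN : 0 < N) (p : Fin k → ℝ)
    (hpos : ∀ x, 0 < p x) (hsum : ∑ x, p x = 1) :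
    (-∑ x, p x * Real.log (((N : ℝ) + 1) / N) ≤
        ∑ x, p x * binomExp N (p x) (fun i => Real.log (((i : ℝ) + 1) / ((N : ℝ) * p x)))) ∧
    (∑ x, p x * binomExp N (p x) (fun i => Real.log (((i : ℝ) + 1) / ((N : ℝ) * p x))) ≤
        (k : ℝ) / N) ∧
    |(∑ x, p x * binomExp N (p x) (fun i => Real.log ((N : ℝ) / ((i : ℝ) + 1)))) -
        (-∑ x, p x * Real.log (p x))| ≤ (k : ℝ) / N := by
  have hN' : (0 : ℝ) < N := by exact_mod_cast hN
  have hp1 : ∀ x, p x ≤ 1 := fun x =>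
    hsum ▸ single_le_sum (fun y _ => (hpos y).le) (mem_univ x)
  set S := ∑ x, p x * binomExp N (p x) (fun i => Real.log (((i : ℝ) + 1) / ((N : ℝ) * p x)))
  have hS0 : 0 ≤ S := sum_nonneg fun x _ =>
    mul_nonneg (hpos x).le (binomExp_log_succ_div_nonneg hN (hpos x) (hp1 x))
  have hSk : S ≤ k / N := calc
    S ≤ ∑ _x : Fin k, (1 / N : ℝ) := sum_le_sum fun x _ =>
        (mul_le_mul_of_nonneg_left (binomExp_log_succ_div_le hN (hpos x) (hp1 x)) (hpos x).le).trans_eq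
          (by field_simp [(hpos x).ne'])
    _ = k / N := by simp [div_eq_mul_inv]
  have hbias : (∑ x, p x * binomExp N (p x) (fun i => Real.log ((N : ℝ) / ((i : ℝ) + 1)))) -
      (-∑ x, p x * Real.log (p x)) = -S := by
    simp only [binomExp_log_div_succ hN (hpos _), mul_sub, mul_neg, sum_sub_distrib, sum_neg_distrib, S]
    ring
  have hlog : 0 ≤ Real.log (((N : ℝ) + 1) / N) :=
    Real.log_nonneg ((one_le_div hN').mpr (by linarith))
  refine ⟨?_, hSk, ?_⟩
  · linarith [sum_nonneg fun x (_ : x ∈ univ) => mul_nonneg (hpos x).le hlog]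
  · rwa [hbias, abs_neg, abs_of_nonneg hS0]
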